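/- arXiv:2211.13395 — 3 statements merged into one kernel-verified Lean document; each statement's English description precedes it below -/
import Mathlib

section
/- Jensen-type inequality for SOS-convex polynomials (Lasserre): if f ∈ ℝ[x] is SOS-convex and w is a truncated moment sequence of degree 2d₁ with w₀ = 1 and M_{d₁}[w] ⪰ 0, where deg(f) ≤ 2d₁, then ⟨f, w⟩ ≥ f(π(w)), where π(w) = (w_{e₁},…,w_{e_n}) is the vector of first-order moments. -/
/-!
Let `a` be the vector of first moments of `w`. Taylor's formula with integral remainder gives
`f x - f a - ∇f(a)·(x - a) = ∫₀¹ (1 - s) (x - a)ᵀ ∇²f(a + s(x - a)) (x - a) ds`.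
By SOS-convexity the integrand is a sum of squares of polynomials in `(s, x)`, and because the
Hankel matrix of the weights `∫₀¹ (1 - s) sᵐ ds = 1/((m+1)(m+2))` is positive semidefinite,
integrating out `s` leaves a sum of squares of polynomials in `x`. The remainder has degree at
most `2 d₁`, and over `ℝ` the leading forms of squares cannot cancel, so each square has degree at
most `d₁` and the Riesz functional is nonnegative on it. Since `w 0 = 1` and `a` is the mean,
the Riesz functional vanishes on the affine part, so `⟨f, w⟩ - f a ≥ 0`.
-/

open MvPolynomial

/-- The Riesz functional of a truncated multi-sequence `w` applied to a polynomial. -/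
noncomputable def Riesz {n : ℕ} (w : (Fin n →₀ ℕ) → ℝ) (p : MvPolynomial (Fin n) ℝ) : ℝ :=
  ∑ α ∈ p.support, coeff α p * w α

/-- A polynomial is SOS-convex if its Hessian equals `V(x)ᵀ V(x)` for a polynomial matrix `V`. -/
def IsSOSConvex {n : ℕ} (f : MvPolynomial (Fin n) ℝ) : Prop :=
  ∃ (k : ℕ) (V : Fin k → Fin n → MvPolynomial (Fin n) ℝ),
    ∀ i j, pderiv i (pderiv j f) = ∑ t, V t i * V t j

open scoped Polynomial Matrix

namespace MvPolynomial
variable {σ R : Type*}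

theorem homogeneousComponent_add_mul_of_totalDegree_le [CommSemiring R] {p q : MvPolynomial σ R}
    {a b : ℕ} (hp : p.totalDegree ≤ a) (hq : q.totalDegree ≤ b) :
    homogeneousComponent (a + b) (p * q) =
      homogeneousComponent a p * homogeneousComponent b q := by
  classical
  ext d
  rw [coeff_homogeneousComponent]
  split_ifs with hd
  · rw [coeff_mul, coeff_mul]
    refine Finset.sum_congr rfl fun x hx => ?_
    rw [coeff_homogeneousComponent, coeff_homogeneousComponent]
    by_cases h₁ : coeff x.1 p = 0
    · simp [h₁]
    by_cases h₂ : coeff x.2 q = 0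
    · simp [h₂]
    have hx₁ : x.1.degree ≤ a := (le_totalDegree (mem_support_iff.mpr h₁)).trans hp
    have hx₂ : x.2.degree ≤ b := (le_totalDegree (mem_support_iff.mpr h₂)).trans hq
    have hx : x.1.degree + x.2.degree = a + b := by
      rw [← map_add, Finset.HasAntidiagonal.mem_antidiagonal.mp hx, hd]
    rw [if_pos (by omega), if_pos (by omega)]
  · exact (((homogeneousComponent_isHomogeneous a p).mul
      (homogeneousComponent_isHomogeneous b q)).coeff_eq_zero hd).symm

theorem homogeneousComponent_totalDegree_ne_zero [CommSemiring R] {p : MvPolynomial σ R}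
    (hp : p ≠ 0) : homogeneousComponent p.totalDegree p ≠ 0 := by
  obtain ⟨d, hd, hdeg⟩ := p.support.exists_mem_eq_sup (support_nonempty.mpr hp) fun s => s.degree
  rw [← support_nonempty, support_homogeneousComponent]
  exact ⟨d, Finset.mem_filter.mpr ⟨hd, hdeg.symm⟩⟩

variable [CommRing R] [LinearOrder R] [IsStrictOrderedRing R]

theorem eq_zero_of_sum_mul_self_eq_zero {ι : Type*} {s : Finset ι} {q : ι → MvPolynomial σ R}
    (h : ∑ j ∈ s, q j * q j = 0) {j : ι} (hj : j ∈ s) : q j = 0 := by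
  refine MvPolynomial.funext fun x => ?_
  have hx : ∑ j ∈ s, eval x (q j) * eval x (q j) = 0 := by simpa using congrArg (eval x) h
  simpa using (Finset.sum_eq_zero_iff_of_nonneg fun i _ => mul_self_nonneg _).mp hx j hj

theorem totalDegree_le_of_sum_mul_self_le {ι : Type*} {s : Finset ι} {q : ι → MvPolynomial σ R}
    {d : ℕ} (h : (∑ j ∈ s, q j * q j).totalDegree ≤ 2 * d) {j : ι} (hj : j ∈ s) :
    (q j).totalDegree ≤ d := by
  by_contra! hjd
  set D := s.sup fun j => (q j).totalDegree
  have hD : ∀ j ∈ s, (q j).totalDegree ≤ D := fun j hj =>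
    Finset.le_sup (f := fun j => (q j).totalDegree) hj
  have htop : ∑ j ∈ s, homogeneousComponent D (q j) * homogeneousComponent D (q j) = 0 := by
    rw [← Finset.sum_congr rfl fun j hj =>
      homogeneousComponent_add_mul_of_totalDegree_le (hD j hj) (hD j hj), ← map_sum]
    exact homogeneousComponent_eq_zero _ _ (by have := hD j hj; omega)
  obtain ⟨j₁, hj₁, hj₁D⟩ := s.exists_mem_eq_sup ⟨j, hj⟩ fun j => (q j).totalDegree
  have hq₁ : q j₁ ≠ 0 := fun h₀ => by
    have := hD j hj
    simp only [h₀, totalDegree_zero] at hj₁D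
    omega
  exact homogeneousComponent_totalDegree_ne_zero hq₁
    (hj₁D ▸ eq_zero_of_sum_mul_self_eq_zero htop hj₁)

end MvPolynomial

noncomputable def taylorWeight (m : ℕ) : ℝ := ((m + 1) * (m + 2) : ℝ)⁻¹

open intervalIntegral in
theorem integral_one_sub_mul_pow (m : ℕ) :
    ∫ s in (0 : ℝ)..1, (1 - s) * s ^ m = taylorWeight m := by
  simp_rw [sub_mul, one_mul, ← pow_succ']
  rw [integral_sub (intervalIntegrable_pow m) (intervalIntegrable_pow (m + 1)),
    integral_pow, integral_pow, taylorWeight]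
  field_simp
  push_cast
  ring

open intervalIntegral in
theorem posSemidef_hankel_taylorWeight (K : ℕ) :
    (Matrix.of fun k l : Fin K => taylorWeight (k + l)).PosSemidef := by
  refine .of_dotProduct_mulVec_nonneg (Matrix.IsHermitian.ext fun k l => by simp [add_comm])
    fun x => ?_
  have hform : star x ⬝ᵥ (Matrix.of fun k l : Fin K => taylorWeight (k + l)) *ᵥ x =
      ∫ s in (0 : ℝ)..1, (1 - s) * (∑ k, x k * s ^ (k : ℕ)) ^ 2 := by
    simp_rw [sq, Finset.sum_mul_sum, Finset.mul_sum]
    rw [integral_finsetSum fun k _ => (Continuous.intervalIntegrable (by fun_prop) _ _)]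
    refine Finset.sum_congr rfl fun k _ => ?_
    rw [integral_finsetSum fun l _ => (Continuous.intervalIntegrable (by fun_prop) _ _)]
    simp only [star_trivial, Matrix.mulVec, dotProduct, Matrix.of_apply, Finset.mul_sum]
    refine Finset.sum_congr rfl fun l _ => ?_
    rw [← integral_one_sub_mul_pow, mul_comm _ (x l), ← mul_assoc, ← integral_const_mul]
    congr 1; ext s; ring
  rw [hform]
  refine integral_nonneg zero_le_one fun s hs => ?_
  have : 0 ≤ 1 - s := by linarith [hs.2]
  positivity

theorem exists_taylorWeight_eq_sum_mul (K : ℕ) :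
    ∃ B : Fin K → Fin K → ℝ, ∀ k l : Fin K, taylorWeight (k + l) = ∑ r, B r k * B r l := by
  open scoped MatrixOrder Matrix.Norms.L2Operator in
  obtain ⟨B, hB⟩ :=
    CStarAlgebra.nonneg_iff_eq_star_mul_self.mp (posSemidef_hankel_taylorWeight K).nonneg
  exact ⟨B, fun k l => by simpa [Matrix.mul_apply] using congrFun₂ hB k l⟩

section TaylorIntegral
variable (A : Type*) [Ring A] [Algebra ℝ A]

/-- The formal integral `∫₀¹ (1 - s) P(s) ds`, computed coefficientwise. -/
noncomputable def taylorIntegral : A[X] →ₗ[ℝ] A :=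
  Polynomial.lsum fun m => taylorWeight m • LinearMap.id

variable {A}

@[simp]
theorem taylorIntegral_monomial (m : ℕ) (c : A) :
    taylorIntegral A (Polynomial.monomial m c) = taylorWeight m • c := by
  simp [taylorIntegral, Polynomial.sum_monomial_index]

theorem taylorIntegral_derivative_derivative (P : A[X]) :
    taylorIntegral A (Polynomial.derivative (Polynomial.derivative P)) =
      P.eval 1 - P.coeff 0 - P.coeff 1 := by
  induction P using Polynomial.induction_on' with
  | add P Q hP hQ => simp only [map_add, hP, hQ, Polynomial.eval_add, Polynomial.coeff_add]; abel
  | monomial m c =>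
    rcases m with _ | _ | m
    · simp
    · simp
    · rw [Polynomial.derivative_monomial, Polynomial.derivative_monomial, taylorIntegral_monomial]
      have hc : c * ((m + 1 + 1 : ℕ) : A) * ((m + 1 : ℕ) : A) =
          (((m + 1) * (m + 2) : ℕ) : ℝ) • c := by
        rw [Nat.cast_smul_eq_nsmul, nsmul_eq_mul', mul_comm (m + 1), Nat.cast_mul, mul_assoc]
      have hw : taylorWeight m * (((m + 1) * (m + 2) : ℕ) : ℝ) = 1 := by
        rw [taylorWeight]; push_cast; exact inv_mul_cancel₀ (by positivity)
      simp only [Nat.add_sub_cancel, hc, smul_smul, hw, one_smul]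
      simp [Polynomial.coeff_monomial]

theorem taylorIntegral_mul_self {K : ℕ} {B : Fin K → Fin K → ℝ}
    (hB : ∀ k l : Fin K, taylorWeight (k + l) = ∑ r, B r k * B r l) {Q : A[X]}
    (hQ : Q.natDegree < K) :
    taylorIntegral A (Q * Q) =
      ∑ r, (∑ k : Fin K, B r k • Q.coeff k) * (∑ k : Fin K, B r k • Q.coeff k) := by
  have hQsum : Q = ∑ k : Fin K, Polynomial.monomial k (Q.coeff k) := by
    rw [Fin.sum_univ_eq_sum_range (fun k => Polynomial.monomial k (Q.coeff k))]
    exact Polynomial.as_sum_range' Q K hQ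
  conv_lhs => rw [hQsum, Finset.sum_mul_sum]
  simp only [Polynomial.monomial_mul_monomial, map_sum, taylorIntegral_monomial, hB,
    Finset.sum_smul, Finset.sum_mul_sum, smul_mul_smul_comm]
  symm
  rw [Finset.sum_comm]
  exact Finset.sum_congr rfl fun _ _ => Finset.sum_comm

end TaylorIntegral

namespace MvPolynomial
variable {σ R : Type*} [CommRing R]

/-- `lineRestrict a f = f (a + t • (X - a))`, a polynomial in `t` over `MvPolynomial σ R`. -/
noncomputable def lineRestrict (a : σ → R) : MvPolynomial σ R →ₐ[R] (MvPolynomial σ R)[X] :=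
  aeval fun i => Polynomial.C (C (a i)) + Polynomial.X * Polynomial.C (X i - C (a i))

theorem lineRestrict_X (a : σ → R) (i : σ) :
    lineRestrict a (X i) = Polynomial.C (C (a i)) + Polynomial.X * Polynomial.C (X i - C (a i)) :=
  aeval_X _ _

theorem eval_one_lineRestrict (a : σ → R) (f : MvPolynomial σ R) :
    (lineRestrict a f).eval 1 = f := by
  induction f using MvPolynomial.induction_on with
  | C r => simp [lineRestrict]
  | add p q hp hq => rw [map_add, Polynomial.eval_add, hp, hq]
  | mul_X p i hp => simp [hp, lineRestrict_X]

theorem coeff_zero_lineRestrict (a : σ → R) (f : MvPolynomial σ R) :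
    (lineRestrict a f).coeff 0 = C (eval a f) := by
  induction f using MvPolynomial.induction_on with
  | C r => simp [lineRestrict]
  | add p q hp hq => rw [map_add, Polynomial.coeff_add, hp, hq, map_add, map_add]
  | mul_X p i hp => simp [Polynomial.mul_coeff_zero, hp, lineRestrict_X]

variable [Fintype σ]

theorem derivative_lineRestrict (a : σ → R) (f : MvPolynomial σ R) :
    Polynomial.derivative (lineRestrict a f) =
      ∑ i, lineRestrict a (pderiv i f) * Polynomial.C (X i - C (a i)) := by
  classical
  induction f using MvPolynomial.induction_on with
  | C r => simp [lineRestrict]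
  | add p q hp hq => simp only [map_add, hp, hq, add_mul, Finset.sum_add_distrib]
  | mul_X p i hp =>
    rw [map_mul, Polynomial.derivative_mul, hp, Finset.sum_mul]
    simp only [pderiv_mul, pderiv_X, map_add, map_mul, add_mul, Finset.sum_add_distrib]
    refine congrArg₂ (· + ·) (Finset.sum_congr rfl fun j _ => by ring) ?_
    simp [lineRestrict_X, Pi.single_apply]

theorem coeff_one_lineRestrict (a : σ → R) (f : MvPolynomial σ R) :
    (lineRestrict a f).coeff 1 = ∑ i, C (eval a (pderiv i f)) * (X i - C (a i)) := by
  simpa [Polynomial.coeff_derivative, Polynomial.finsetSum_coeff, coeff_zero_lineRestrict] using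
    congrArg (Polynomial.coeff · 0) (derivative_lineRestrict a f)

noncomputable def taylorRemainder (a : σ → R) (f : MvPolynomial σ R) : MvPolynomial σ R :=
  f - C (eval a f) - ∑ i, C (eval a (pderiv i f)) * (X i - C (a i))

theorem totalDegree_taylorRemainder_le {a : σ → R} {f : MvPolynomial σ R} {d : ℕ} (hd : 1 ≤ d)
    (hf : f.totalDegree ≤ d) : (taylorRemainder a f).totalDegree ≤ d := by
  refine (totalDegree_sub _ _).trans (max_le ((totalDegree_sub_C_le _ _).trans hf) ?_)
  refine (totalDegree_finsetSum _ _).trans (Finset.sup_le fun i _ => ?_)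
  refine (totalDegree_mul _ _).trans ?_
  have hX : (X i : MvPolynomial σ R).totalDegree ≤ 1 :=
    (totalDegree_monomial_le _ _).trans (by simp)
  rw [totalDegree_C, zero_add]
  exact (totalDegree_sub_C_le _ _).trans (hX.trans hd)

theorem derivative_derivative_lineRestrict_of_hessian_eq {ι : Type*} [Fintype ι] (a : σ → R)
    {f : MvPolynomial σ R} {V : ι → σ → MvPolynomial σ R}
    (hV : ∀ i j, pderiv i (pderiv j f) = ∑ t, V t i * V t j) :
    Polynomial.derivative (Polynomial.derivative (lineRestrict a f)) =
      ∑ t, (∑ i, lineRestrict a (V t i) * Polynomial.C (X i - C (a i))) *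
        (∑ i, lineRestrict a (V t i) * Polynomial.C (X i - C (a i))) := by
  simp_rw [Finset.sum_mul_sum]
  simp only [derivative_lineRestrict, map_sum, Polynomial.derivative_mul, Polynomial.derivative_C,
    mul_zero, add_zero, hV, map_mul, Finset.sum_mul]
  conv_rhs => rw [Finset.sum_comm]; enter [2, i]; rw [Finset.sum_comm]
  rw [Finset.sum_comm]
  exact Finset.sum_congr rfl fun i _ => Finset.sum_congr rfl fun j _ =>
    Finset.sum_congr rfl fun t _ => by ring

theorem taylorRemainder_eq_taylorIntegral (a : σ → ℝ) (f : MvPolynomial σ ℝ) :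
    taylorRemainder a f =
      taylorIntegral _ (Polynomial.derivative (Polynomial.derivative (lineRestrict a f))) := by
  rw [taylorIntegral_derivative_derivative, eval_one_lineRestrict, coeff_zero_lineRestrict,
    coeff_one_lineRestrict, taylorRemainder]

end MvPolynomial

theorem IsSOSConvex.exists_taylorRemainder_eq_sum_mul_self {n : ℕ} {f : MvPolynomial (Fin n) ℝ}
    (hf : IsSOSConvex f) (a : Fin n → ℝ) :
    ∃ (ι : Type) (s : Finset ι) (q : ι → MvPolynomial (Fin n) ℝ),
      taylorRemainder a f = ∑ j ∈ s, q j * q j := by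
  obtain ⟨k, V, hV⟩ := hf
  set Q : Fin k → (MvPolynomial (Fin n) ℝ)[X] := fun t =>
    ∑ i, lineRestrict a (V t i) * Polynomial.C (X i - C (a i))
  obtain ⟨K, hK⟩ : ∃ K, ∀ t, (Q t).natDegree < K :=
    ⟨Finset.univ.sup (fun t => (Q t).natDegree) + 1, fun t =>
      Nat.lt_succ_of_le (Finset.le_sup (f := fun t => (Q t).natDegree) (Finset.mem_univ t))⟩
  obtain ⟨B, hB⟩ := exists_taylorWeight_eq_sum_mul K
  refine ⟨Fin k × Fin K, Finset.univ, fun tr => ∑ l : Fin K, B tr.2 l • (Q tr.1).coeff l, ?_⟩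
  rw [taylorRemainder_eq_taylorIntegral, derivative_derivative_lineRestrict_of_hessian_eq a hV,
    map_sum, Finset.univ_product_univ.symm, Finset.sum_product]
  exact Finset.sum_congr rfl fun t _ => taylorIntegral_mul_self hB (hK t)

section Riesz

variable {n : ℕ} (w : (Fin n →₀ ℕ) → ℝ)

theorem riesz_eq_sum_of_support_subset {p : MvPolynomial (Fin n) ℝ} {s : Finset (Fin n →₀ ℕ)}
    (h : p.support ⊆ s) : Riesz w p = ∑ α ∈ s, coeff α p * w α :=
  Finset.sum_subset h fun α _ hα => by rw [notMem_support_iff.mp hα, zero_mul]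

noncomputable def rieszLinearMap : MvPolynomial (Fin n) ℝ →ₗ[ℝ] ℝ where
  toFun := Riesz w
  map_add' p q := by
    classical
    rw [riesz_eq_sum_of_support_subset w support_add,
      riesz_eq_sum_of_support_subset w Finset.subset_union_left,
      riesz_eq_sum_of_support_subset w Finset.subset_union_right, ← Finset.sum_add_distrib]
    simp only [coeff_add, add_mul]
  map_smul' c p := by
    rw [riesz_eq_sum_of_support_subset w support_smul, Riesz, RingHom.id_apply, smul_eq_mul,
      Finset.mul_sum]
    simp only [coeff_smul, smul_eq_mul, mul_assoc]

@[simp]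
theorem rieszLinearMap_apply (p : MvPolynomial (Fin n) ℝ) : rieszLinearMap w p = Riesz w p := rfl

theorem riesz_C (c : ℝ) : Riesz w (C c) = c * w 0 := by
  rw [C_apply, riesz_eq_sum_of_support_subset w support_monomial_subset]
  simp

theorem riesz_X (i : Fin n) : Riesz w (X i) = w (Finsupp.single i 1) := by
  simp [Riesz, support_X]

variable {w}

theorem riesz_nonneg_of_eq_sum_mul_self {d : ℕ}
    (hpsd : ∀ p : MvPolynomial (Fin n) ℝ, p.totalDegree ≤ d → 0 ≤ Riesz w (p * p))
    {p : MvPolynomial (Fin n) ℝ} (hp : p.totalDegree ≤ 2 * d) {ι : Type*} {s : Finset ι}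
    {q : ι → MvPolynomial (Fin n) ℝ} (hpq : p = ∑ j ∈ s, q j * q j) : 0 ≤ Riesz w p := by
  rw [hpq, ← rieszLinearMap_apply, map_sum]
  exact Finset.sum_nonneg fun j hj =>
    hpsd _ (totalDegree_le_of_sum_mul_self_le (hpq ▸ hp) hj)

theorem riesz_taylorRemainder (hw0 : w 0 = 1) (f : MvPolynomial (Fin n) ℝ) :
    Riesz w (taylorRemainder (fun i => w (Finsupp.single i 1)) f) =
      Riesz w f - eval (fun i => w (Finsupp.single i 1)) f := by
  simp only [taylorRemainder, C_mul', ← rieszLinearMap_apply, map_sub, map_sum, map_smul]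
  simp [riesz_C, riesz_X, hw0]

end Riesz

theorem stmt12 {n d₁ : ℕ} (f : MvPolynomial (Fin n) ℝ) (hf : IsSOSConvex f)
    (hdeg : f.totalDegree ≤ 2 * d₁)
    (w : (Fin n →₀ ℕ) → ℝ) (hw0 : w 0 = 1)
    (hpsd : ∀ p : MvPolynomial (Fin n) ℝ, p.totalDegree ≤ d₁ → 0 ≤ Riesz w (p * p)) :
    eval (fun i => w (Finsupp.single i 1)) f ≤ Riesz w f := by
  rcases Nat.eq_zero_or_pos d₁ with rfl | hd₁
  · rw [totalDegree_eq_zero_iff_eq_C.mp (Nat.le_zero.mp hdeg)]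
    simp [riesz_C, hw0]
  obtain ⟨ι, s, q, hq⟩ := hf.exists_taylorRemainder_eq_sum_mul_self fun i => w (Finsupp.single i 1)
  have h := riesz_nonneg_of_eq_sum_mul_self hpsd (totalDegree_taylorRemainder_le (by omega) hdeg) hq
  rw [riesz_taylorRemainder hw0] at h
  linarith
end

section
/- Order-statistics quantile upper bound: let ξ⁽¹⁾,…,ξ⁽ᴺ⁾ be i.i.d. samples of ξ and let G(ξ) be a real-valued measurable function; order the samples so that G(ξ⁽¹⁾) ≤ ⋯ ≤ G(ξ⁽ᴺ⁾). For ε, β ∈ (0,1), if L satisfies Σ_{i=0}^{L−1} C(N,i)(1−ε)^i ε^{N−i} ≥ 1−β, then with probability at least 1−β, G(ξ⁽ᴸ⁾) is an upper bound on the (1−ε)-quantile of G(ξ), i.e., P(G(ξ⁽ᴸ⁾) ≥ q_{1−ε}) ≥ 1−β where q_{1−ε} = inf{t : P(G(ξ) ≤ t) ≥ 1−ε}. -/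
/-!
Let `q` be the `(1 - ε)`-quantile of `G(ξ)`. Every `t < q` has `P(G(ξ) ≤ t) < 1 - ε`, so by
continuity from below `p := P(G(ξ) < q) ≤ 1 - ε`. The events `G(ξ⁽ⁱ⁾) < q` are independent
with probability `p`, so the probability that fewer than `L` of them occur is the binomial
distribution function `F(p) = ∑_{k<L} C(N,k) pᵏ (1-p)^(N-k)`. Finally `F` is antitone in `p`,
hence `F(p) ≥ F(1 - ε) ≥ 1 - β`.
-/

open MeasureTheory ProbabilityTheory Set Filter
open scoped ENNReal Finset

lemma measure_Iio_sInf_le {μ : Measure ℝ} [IsProbabilityMeasure μ] {c : ℝ≥0∞}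
    (hc : 0 < c) : μ (Iio (sInf {t | c ≤ μ (Iic t)})) ≤ c := by
  rcases le_or_gt 1 c with hc1 | hc1
  · exact prob_le_one.trans hc1
  set S := {t | c ≤ μ (Iic t)}
  have hS : S.Nonempty := by
    have hlim := tendsto_measure_Iic_atTop μ
    rw [measure_univ] at hlim
    obtain ⟨t, ht⟩ := (hlim.eventually (lt_mem_nhds hc1)).exists
    exact ⟨t, ht.le⟩
  have hS_bdd : BddBelow S := by
    have hlim := tendsto_measure_iInter_atBot (μ := μ)
      (fun t ↦ measurableSet_Iic.nullMeasurableSet) monotone_Iic ⟨0, measure_ne_top μ _⟩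
    rw [iInter_Iic_eq_empty_iff.2 (by simp), measure_empty] at hlim
    obtain ⟨t₀, ht₀⟩ := eventually_atBot.1 (hlim.eventually (gt_mem_nhds hc))
    exact ⟨t₀, fun t ht ↦ le_of_not_gt fun hlt ↦ (ht₀ t hlt.le).not_ge ht⟩
  obtain ⟨u, hu_mono, hu_lt, hu_lim⟩ := exists_seq_strictMono_tendsto (sInf S)
  rw [← iUnion_Iic_eq_Iio_of_lt_of_tendsto hu_lt hu_lim,
    Monotone.measure_iUnion fun m n hmn ↦ Iic_subset_Iic.2 (hu_mono.monotone hmn)]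
  exact iSup_le fun n ↦ le_of_not_ge fun hn ↦ (hu_lt n).not_ge (csInf_le hS_bdd hn)

noncomputable def binomialCdf (n L : ℕ) (p : ℝ) : ℝ :=
  ∑ k ∈ Finset.range L, n.choose k * p ^ k * (1 - p) ^ (n - k)

lemma Finset.sum_filter_card_lt {ι M : Type*} [Fintype ι] [AddCommMonoid M] (L : ℕ)
    (f : ℕ → M) :
    ∑ T : Finset ι with #T < L, f #T = ∑ k ∈ range L, (Fintype.card ι).choose k • f k := by
  classical
  rw [← sum_fiberwise_of_maps_to (g := card) (t := range L) (by simp)]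
  refine sum_congr rfl fun k hk ↦ ?_
  have hfiber :
      {T ∈ ({T | #T < L} : Finset (Finset ι)) | #T = k} = powersetCard k univ := by
    ext T
    simp only [mem_filter, mem_univ, true_and, mem_powersetCard, subset_univ]
    constructor
    · exact And.right
    · rintro rfl; exact ⟨mem_range.1 hk, rfl⟩
  rw [sum_congr rfl fun T hT ↦ by rw [(mem_filter.1 hT).2], sum_const, hfiber, card_powersetCard,
    card_univ]

lemma setOf_setOf_mem_eq_coe_eq_iInter {Ω α ι : Type*} [DecidableEq ι] {ξ : ι → Ω → α}
    {E : Set α} (T : Finset ι) :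
    {ω | {i | ξ i ω ∈ E} = T} = ⋂ i, ξ i ⁻¹' (if i ∈ T then E else Eᶜ) := by
  ext ω
  simp only [Set.ext_iff, mem_iInter, mem_preimage, mem_ofPred_eq, Finset.mem_coe]
  refine forall_congr' fun i ↦ ?_
  split_ifs with hi <;> simp [hi]

section IndependentTrials

variable {Ω α ι : Type*} [MeasurableSpace Ω] [MeasurableSpace α] [Fintype ι]
  {P : Measure Ω} {ν : Measure α} {ξ : ι → Ω → α} {E : Set α}

lemma measurableSet_setOf_setOf_mem_eq_coe (hmeas : ∀ i, Measurable (ξ i))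
    (hE : MeasurableSet E) (T : Finset ι) : MeasurableSet {ω | {i | ξ i ω ∈ E} = T} := by
  classical
  rw [setOf_setOf_mem_eq_coe_eq_iInter]
  exact .iInter fun i ↦ hmeas i (by split_ifs; exacts [hE, hE.compl])

lemma measure_setOf_setOf_mem_eq_coe (hmeas : ∀ i, Measurable (ξ i)) (hindep : iIndepFun ξ P)
    (hdist : ∀ i, P.map (ξ i) = ν) (hE : MeasurableSet E) (T : Finset ι) :
    P {ω | {i | ξ i ω ∈ E} = T} = ν E ^ #T * ν Eᶜ ^ (Fintype.card ι - #T) := by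
  classical
  have hsets (i : ι) : MeasurableSet (if i ∈ T then E else Eᶜ) := by
    split_ifs
    exacts [hE, hE.compl]
  rw [setOf_setOf_mem_eq_coe_eq_iInter, hindep.meas_iInter fun i ↦ ⟨_, hsets i, rfl⟩]
  simp_rw [← Measure.map_apply (hmeas _) (hsets _), hdist, apply_ite ν]
  simp [Finset.prod_ite, Finset.filter_not, Finset.card_univ_sdiff]

lemma measureReal_ncard_setOf_mem_lt [IsProbabilityMeasure P] [IsProbabilityMeasure ν]
    (hmeas : ∀ i, Measurable (ξ i)) (hindep : iIndepFun ξ P) (hdist : ∀ i, P.map (ξ i) = ν)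
    (hE : MeasurableSet E) (L : ℕ) :
    P.real {ω | {i | ξ i ω ∈ E}.ncard < L} = binomialCdf (Fintype.card ι) L (ν.real E) := by
  have hunion : {ω | {i | ξ i ω ∈ E}.ncard < L} =
      ⋃ T ∈ ({T | #T < L} : Finset (Finset ι)), {ω | {i | ξ i ω ∈ E} = T} := by
    ext ω
    simp only [mem_ofPred_eq, mem_iUnion, Finset.mem_filter, Finset.mem_univ, true_and,
      exists_prop]
    constructor
    · intro h
      exact ⟨(toFinite _).toFinset, by rwa [← ncard_eq_toFinset_card], by simp⟩
    · rintro ⟨T, hT, hω⟩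
      rwa [hω, ncard_coe_finset]
  have hdisj : PairwiseDisjoint ↑({T | #T < L} : Finset (Finset ι))
      fun T : Finset ι ↦ {ω | {i | ξ i ω ∈ E} = T} :=
    fun T _ T' _ hne ↦ disjoint_left.2 fun ω h h' ↦ hne (Finset.coe_injective (h.symm.trans h'))
  rw [hunion, measureReal_biUnion_finset hdisj
    fun T _ ↦ measurableSet_setOf_setOf_mem_eq_coe hmeas hE T]
  simp_rw [measureReal_def, measure_setOf_setOf_mem_eq_coe hmeas hindep hdist hE,
    ENNReal.toReal_mul, ENNReal.toReal_pow, ← measureReal_def, probReal_compl_eq_one_sub hE]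
  rw [Finset.sum_filter_card_lt L fun k ↦ ν.real E ^ k * (1 - ν.real E) ^ (Fintype.card ι - k),
    binomialCdf]
  simp_rw [nsmul_eq_mul, mul_assoc]

end IndependentTrials

-- Coupling: `binomialCdf n L p` is the probability that fewer than `L` of `n` independent
-- uniform variables on `[0, 1]` fall below `p`, and that event shrinks as `p` grows.
open unitInterval in
lemma binomialCdf_antitoneOn (n L : ℕ) : AntitoneOn (binomialCdf n L) (Icc 0 1) := by
  intro p hp p' hp' hpp'
  have hindep : iIndepFun (fun i (x : Fin n → I) ↦ x i) volume :=
    iIndepFun_pi (X := fun _ ↦ id) fun _ ↦ aemeasurable_id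
  have hdist (i : Fin n) : volume.map (fun x : Fin n → I ↦ x i) = volume :=
    (measurePreserving_eval _ i).map_eq
  have hcdf (q : ℝ) (hq : q ∈ Icc 0 1) :
      binomialCdf n L q = volume.real {x : Fin n → I | {i | x i ∈ Iio ⟨q, hq⟩}.ncard < L} := by
    rw [measureReal_ncard_setOf_mem_lt (fun i ↦ measurable_pi_apply i) hindep hdist
      measurableSet_Iio, Fintype.card_fin, measureReal_def, volume_Iio, ENNReal.toReal_ofReal hq.1]
  rw [hcdf p hp, hcdf p' hp']
  refine measureReal_mono fun x hx ↦ lt_of_le_of_lt (ncard_le_ncard ?_) hx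
  exact fun i (hi : x i < ⟨p, hp⟩) ↦ hi.trans_le hpp'

theorem stmt18_general {Ω : Type*} [MeasurableSpace Ω] (P : Measure Ω) [IsProbabilityMeasure P]
    {r N : ℕ} (ν : Measure (Fin r → ℝ)) [IsProbabilityMeasure ν]
    (ξs : Fin N → Ω → (Fin r → ℝ)) (hmeas : ∀ i, Measurable (ξs i))
    (hindep : iIndepFun ξs P)
    (hdist : ∀ i, Measure.map (ξs i) P = ν)
    (G : (Fin r → ℝ) → ℝ) (hG : Measurable G)
    (ε β : ℝ) (hε : ε ∈ Set.Ioo (0 : ℝ) 1)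
    (L : ℕ)
    (hL : 1 - β ≤ ∑ i ∈ Finset.range L, (N.choose i : ℝ) * (1 - ε) ^ i * ε ^ (N - i)) :
    ENNReal.ofReal (1 - β) ≤
      P {ω | {i : Fin N | G (ξs i ω) <
        sInf {t : ℝ | ENNReal.ofReal (1 - ε) ≤ ν {ζ | G ζ ≤ t}}}.ncard < L} := by
  set q := sInf {t : ℝ | ENNReal.ofReal (1 - ε) ≤ ν {ζ | G ζ ≤ t}}
  have hq : ν {ζ | G ζ < q} ≤ ENNReal.ofReal (1 - ε) := by
    have := Measure.isProbabilityMeasure_map (μ := ν) hG.aemeasurable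
    have := measure_Iio_sInf_le (μ := ν.map G) (ENNReal.ofReal_pos.2 (sub_pos.2 hε.2))
    simp_rw [Measure.map_apply hG measurableSet_Iic, Measure.map_apply hG measurableSet_Iio]
      at this
    exact this
  have hp : ν.real {ζ | G ζ < q} ≤ 1 - ε := ENNReal.toReal_le_of_le_ofReal (by linarith [hε.2]) hq
  have hcount := measureReal_ncard_setOf_mem_lt (E := {ζ | G ζ < q}) hmeas hindep hdist
    (hG measurableSet_Iio) L
  rw [Fintype.card_fin] at hcount
  rw [ENNReal.ofReal_le_iff_le_toReal (measure_ne_top _ _), ← measureReal_def]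
  calc 1 - β ≤ binomialCdf N L (1 - ε) := by simpa only [binomialCdf, sub_sub_cancel] using hL
    _ ≤ binomialCdf N L (ν.real {ζ | G ζ < q}) :=
      binomialCdf_antitoneOn N L ⟨measureReal_nonneg, measureReal_le_one⟩
        ⟨by linarith [hε.2], by linarith [hε.1]⟩ hp
    _ = _ := hcount.symm

theorem stmt18 {Ω : Type*} [MeasurableSpace Ω] (P : Measure Ω) [IsProbabilityMeasure P]
    {r N : ℕ} (ν : Measure (Fin r → ℝ)) [IsProbabilityMeasure ν]
    (ξs : Fin N → Ω → (Fin r → ℝ)) (hmeas : ∀ i, Measurable (ξs i))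
    (hindep : iIndepFun ξs P)
    (hdist : ∀ i, Measure.map (ξs i) P = ν)
    (G : (Fin r → ℝ) → ℝ) (hG : Measurable G)
    (ε β : ℝ) (hε : ε ∈ Set.Ioo (0 : ℝ) 1) (hβ : β ∈ Set.Ioo (0 : ℝ) 1)
    (L : ℕ)
    (hL : 1 - β ≤ ∑ i ∈ Finset.range L, (N.choose i : ℝ) * (1 - ε) ^ i * ε ^ (N - i)) :
    ENNReal.ofReal (1 - β) ≤
      P {ω | {i : Fin N | G (ξs i ω) <
        sInf {t : ℝ | ENNReal.ofReal (1 - ε) ≤ ν {ζ | G ζ ≤ t}}}.ncard < L} :=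
  stmt18_general P ν ξs hmeas hindep hdist G hG ε β hε L hL
end

section
/- If the moment relaxation optimizer satisfies y* ∈ ℛ_d(U) (i.e., y* admits a representing measure supported in U) and the SOS relaxation and moment relaxation at order k have equal optimal values, then any optimizer x* of the SOS relaxation at order k is a global minimizer of the robust approximation problem minimizing cᵀx over x ∈ X with (Ax+b)ᵀ[ξ]_d ∈ 𝒫_d(U). -/
/-! If `x*` is feasible for the robust problem (because `Q_k ⊆ P`) and its value `cᵀx*` equals the
value `-bᵀy*` of a point `y*` feasible for the dual problem, then weak duality
`-bᵀy* ≤ cᵀx` for every robust-feasible `x` shows that `x*` is optimal. -/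

open Matrix

section WeakDuality

variable {m n R : Type*} [Fintype m] [Fintype n] [CommRing R]

theorem dotProduct_sub_transpose_mulVec_add (A : Matrix m n R) (b : m → R) (c x : n → R)
    (y : m → R) :
    (c - Aᵀ *ᵥ y) ⬝ᵥ x + (A *ᵥ x + b) ⬝ᵥ y = c ⬝ᵥ x + b ⬝ᵥ y := by
  rw [sub_dotProduct, add_dotProduct, mulVec_transpose, ← dotProduct_mulVec,
    dotProduct_comm (A *ᵥ x)]
  abel

theorem neg_dotProduct_le_dotProduct_of_nonneg [PartialOrder R] [IsOrderedRing R]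
    {A : Matrix m n R} {b : m → R} {c x : n → R} {y : m → R} (hprimal : 0 ≤ (A *ᵥ x + b) ⬝ᵥ y) (hdual : 0 ≤ (c - Aᵀ *ᵥ y) ⬝ᵥ x) :
    -(b ⬝ᵥ y) ≤ c ⬝ᵥ x := by
  have hsum : 0 ≤ c ⬝ᵥ x + b ⬝ᵥ y :=
    dotProduct_sub_transpose_mulVec_add A b c x y ▸ add_nonneg hdual hprimal
  exact neg_le_iff_add_nonneg.mpr hsum

end WeakDuality

theorem stmt19_general {n N : ℕ} (Xset : Set (Fin n → ℝ))
    (Pcone Rcone Qk : Set (Fin N → ℝ))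
    (hQP : Qk ⊆ Pcone)
    (hpair : ∀ p ∈ Pcone, ∀ y ∈ Rcone, 0 ≤ p ⬝ᵥ y)
    (A : Matrix (Fin N) (Fin n) ℝ) (b : Fin N → ℝ) (c : Fin n → ℝ)
    (xstar : Fin n → ℝ) (ystar : Fin N → ℝ)
    (hxX : xstar ∈ Xset) (hxQ : A *ᵥ xstar + b ∈ Qk)
    (hyXstar : c - Aᵀ *ᵥ ystar ∈ {z : Fin n → ℝ | ∀ x' ∈ Xset, 0 ≤ z ⬝ᵥ x'})
    (hyR : ystar ∈ Rcone)
    (hgap : c ⬝ᵥ xstar = -(b ⬝ᵥ ystar)) :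
    (xstar ∈ Xset ∧ A *ᵥ xstar + b ∈ Pcone) ∧
      ∀ x, x ∈ Xset → A *ᵥ x + b ∈ Pcone → c ⬝ᵥ xstar ≤ c ⬝ᵥ x := by
  refine ⟨⟨hxX, hQP hxQ⟩, fun x hx hxP => ?_⟩
  rw [hgap]
  exact neg_dotProduct_le_dotProduct_of_nonneg (hpair _ hxP _ hyR) (hyXstar x hx)

theorem stmt19 {n N : ℕ} (Xset : Set (Fin n → ℝ))
    (Pcone Rcone Qk : Set (Fin N → ℝ))
    (hQP : Qk ⊆ Pcone)
    (hpair : ∀ p ∈ Pcone, ∀ y ∈ Rcone, 0 ≤ p ⬝ᵥ y)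
    (A : Matrix (Fin N) (Fin n) ℝ) (b : Fin N → ℝ) (c : Fin n → ℝ)
    (xstar : Fin n → ℝ) (ystar : Fin N → ℝ)
    (hxX : xstar ∈ Xset) (hxQ : A *ᵥ xstar + b ∈ Qk)
    (hxopt : ∀ x, x ∈ Xset → A *ᵥ x + b ∈ Qk → c ⬝ᵥ xstar ≤ c ⬝ᵥ x)
    (hyXstar : c - Aᵀ *ᵥ ystar ∈ {z : Fin n → ℝ | ∀ x' ∈ Xset, 0 ≤ z ⬝ᵥ x'})
    (hyR : ystar ∈ Rcone)
    (hgap : c ⬝ᵥ xstar = -(b ⬝ᵥ ystar)) :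
    (xstar ∈ Xset ∧ A *ᵥ xstar + b ∈ Pcone) ∧
      ∀ x, x ∈ Xset → A *ᵥ x + b ∈ Pcone → c ⬝ᵥ xstar ≤ c ⬝ᵥ x :=
  stmt19_general Xset Pcone Rcone Qk hQP hpair A b c xstar ystar hxX hxQ hyXstar hyR hgap
end
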